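/- Let P, Q, R, S : ℂ → ℂ be arbitrary entire functions. Define the A-difference functions D_P(w) = P(iπ−w) + e^{iℓπ}·e^{2(1−ℓ)w}·P(w), D_Q(w) = Q(iπ−w) − e^{iℓπ}·e^{−2ℓw}·(μ·P(w) + e^{2w}·R(w)), D_R(w) = R(iπ−w) − e^{iℓπ}·e^{2(1−ℓ)w}·(μ·e^{2w}·P(w) + Q(w)), D_S(w) = S(iπ−w) + e^{iℓπ}·e^{−2ℓw}·(μ·(μ·e^{2w}·P(w) + Q(w)) + e^{2w}·(μ·e^{2w}·R(w) + S(w))), and set 𝔇(w) = e^{2(1−ℓ)w}·(P(w)·S(w) − Q(w)·R(w)). Then for every w ∈ ℂ the identity 𝔇(iπ−w) = 𝔇(w) + e^{−iℓπ}·( e^{−iℓπ}·e^{2(ℓ−1)w}·(S(iπ−w)·D_P(w) − R(iπ−w)·D_Q(w)) − (R(w) + μ·e^{−2w}·P(w))·D_R(w) − P(w)·D_S(w) ) holds. In particular, if the A-relations hold (so that D_P, D_Q, D_R, D_S vanish identically), then 𝔇(iπ−w) = 𝔇(w) for all w. -/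

import Mathlib

noncomputable def ipi : ℂ := (Real.pi : ℂ) * Complex.I

noncomputable def DP (ell mu : ℂ) (P Q R S : ℂ → ℂ) : ℂ → ℂ := fun w =>
  P (ipi - w) + Complex.exp (Complex.I * ell * (Real.pi : ℂ)) * Complex.exp (2 * (1 - ell) * w) * P w

noncomputable def DQ (ell mu : ℂ) (P Q R S : ℂ → ℂ) : ℂ → ℂ := fun w =>
  Q (ipi - w) - Complex.exp (Complex.I * ell * (Real.pi : ℂ)) * Complex.exp (-(2 * ell) * w) *
    (mu * P w + Complex.exp (2 * w) * R w)

noncomputable def DR (ell mu : ℂ) (P Q R S : ℂ → ℂ) : ℂ → ℂ := fun w =>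
  R (ipi - w) - Complex.exp (Complex.I * ell * (Real.pi : ℂ)) * Complex.exp (2 * (1 - ell) * w) *
    (mu * Complex.exp (2 * w) * P w + Q w)

noncomputable def DS (ell mu : ℂ) (P Q R S : ℂ → ℂ) : ℂ → ℂ := fun w =>
  S (ipi - w) + Complex.exp (Complex.I * ell * (Real.pi : ℂ)) * Complex.exp (-(2 * ell) * w) *
    (mu * (mu * Complex.exp (2 * w) * P w + Q w) +
      Complex.exp (2 * w) * (mu * Complex.exp (2 * w) * R w + S w))

noncomputable def dfrak (ell : ℂ) (P Q R S : ℂ → ℂ) : ℂ → ℂ := fun w =>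
  Complex.exp (2 * (1 - ell) * w) * (P w * S w - Q w * R w)

/-!
With `A = e^{iℓπ}`, `E = e^{2(1-ℓ)w}` and `X = e^{2w}`, every exponential in the identity is a
Laurent monomial in `A, E, X`; in particular `e^{2(1-ℓ)(iπ-w)} = A⁻² E⁻¹` because `e^{2πi} = 1`.
The identity then becomes a polynomial identity in `A, E, X`, their inverses, and the values of
`P, Q, R, S` at `w` and at `iπ - w`.
-/

open Complex
open scoped Real

/-- `p, q, r, s` stand for the values at `w`, and `p', q', r', s'` for those at `iπ - w`. -/
theorem first_integral_identity {K : Type*} [Field K] {A E X : K}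
    (hA : A ≠ 0) (hE : E ≠ 0) (hX : X ≠ 0) (μ p q r s p' q' r' s' : K) :
    A⁻¹ ^ 2 * E⁻¹ * (p' * s' - q' * r') =
      E * (p * s - q * r) +
        A⁻¹ * (A⁻¹ * E⁻¹ *
            (s' * (p' + A * E * p) - r' * (q' - A * (E * X⁻¹) * (μ * p + X * r))) -
          (r + μ * X⁻¹ * p) * (r' - A * E * (μ * X * p + q)) -
          p * (s' + A * (E * X⁻¹) * (μ * (μ * X * p + q) + X * (μ * X * r + s)))) := by
  field_simp
  ring

theorem exp_two_mul_one_sub_mul_ipi_sub (ell w : ℂ) :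
    exp (2 * (1 - ell) * (ipi - w)) =
      (exp (I * ell * π))⁻¹ ^ 2 * (exp (2 * (1 - ell) * w))⁻¹ := by
  have h : 2 * (1 - ell) * (ipi - w) =
      2 * π * I + -(I * ell * π) + -(I * ell * π) + -(2 * (1 - ell) * w) := by
    simp only [ipi]; ring
  rw [h, exp_add, exp_add, exp_add, exp_two_pi_mul_I, exp_neg, exp_neg]
  ring

theorem dfrak_ipi_sub (ell mu : ℂ) (P Q R S : ℂ → ℂ) (w : ℂ) :
    dfrak ell P Q R S (ipi - w) =
      dfrak ell P Q R S w +
        exp (-(I * ell * π)) *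
          (exp (-(I * ell * π)) * exp (2 * (ell - 1) * w) *
            (S (ipi - w) * DP ell mu P Q R S w - R (ipi - w) * DQ ell mu P Q R S w) -
            (R w + mu * exp (-(2 * w)) * P w) * DR ell mu P Q R S w -
            P w * DS ell mu P Q R S w) := by
  have hneg : exp (-(2 * ell) * w) = exp (2 * (1 - ell) * w) * (exp (2 * w))⁻¹ := by
    rw [← exp_neg, ← exp_add]; ring_nf
  have hinv : exp (2 * (ell - 1) * w) = (exp (2 * (1 - ell) * w))⁻¹ := by
    rw [← exp_neg]; ring_nf
  simp only [dfrak, DP, DQ, DR, DS]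
  rw [exp_two_mul_one_sub_mul_ipi_sub, hneg, hinv, exp_neg, exp_neg (2 * w)]
  exact first_integral_identity (exp_ne_zero _) (exp_ne_zero _) (exp_ne_zero _) _ _ _ _ _ _ _ _ _

theorem statement_19_general (ell mu : ℂ) (P Q R S : ℂ → ℂ) :
    (∀ w : ℂ,
      dfrak ell P Q R S (ipi - w) =
        dfrak ell P Q R S w +
          Complex.exp (-(Complex.I * ell * (Real.pi : ℂ))) *
            (Complex.exp (-(Complex.I * ell * (Real.pi : ℂ))) * Complex.exp (2 * (ell - 1) * w) *
              (S (ipi - w) * DP ell mu P Q R S w - R (ipi - w) * DQ ell mu P Q R S w) -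
              (R w + mu * Complex.exp (-(2 * w)) * P w) * DR ell mu P Q R S w -
              P w * DS ell mu P Q R S w)) ∧
    ((∀ w : ℂ, DP ell mu P Q R S w = 0 ∧ DQ ell mu P Q R S w = 0 ∧
        DR ell mu P Q R S w = 0 ∧ DS ell mu P Q R S w = 0) →
      ∀ w : ℂ, dfrak ell P Q R S (ipi - w) = dfrak ell P Q R S w) := by
  refine ⟨dfrak_ipi_sub ell mu P Q R S, fun hA w => ?_⟩
  obtain ⟨hDP, hDQ, hDR, hDS⟩ := hA w
  rw [dfrak_ipi_sub ell mu P Q R S w, hDP, hDQ, hDR, hDS]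
  ring

theorem statement_19 (ell lam mu : ℂ) (P Q R S : ℂ → ℂ)
    (hP : Differentiable ℂ P) (hQ : Differentiable ℂ Q)
    (hR : Differentiable ℂ R) (hS : Differentiable ℂ S) :
    (∀ w : ℂ,
      dfrak ell P Q R S (ipi - w) =
        dfrak ell P Q R S w +
          Complex.exp (-(Complex.I * ell * (Real.pi : ℂ))) *
            (Complex.exp (-(Complex.I * ell * (Real.pi : ℂ))) * Complex.exp (2 * (ell - 1) * w) *
              (S (ipi - w) * DP ell mu P Q R S w - R (ipi - w) * DQ ell mu P Q R S w) -
              (R w + mu * Complex.exp (-(2 * w)) * P w) * DR ell mu P Q R S w -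
              P w * DS ell mu P Q R S w)) ∧
    ((∀ w : ℂ, DP ell mu P Q R S w = 0 ∧ DQ ell mu P Q R S w = 0 ∧
        DR ell mu P Q R S w = 0 ∧ DS ell mu P Q R S w = 0) →
      ∀ w : ℂ, dfrak ell P Q R S (ipi - w) = dfrak ell P Q R S w) :=
  statement_19_general ell mu P Q R S
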